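/- Let G be an edge-colored finite simple graph on at least 3 vertices, t a positive integer, and let F₁, ..., F_t be edge-disjoint rainbow spanning forests of G such that Σ_{i=1}^{t} |E(F_i)| ≥ t - 1 + |c(∪_{i=1}^t F_i)| and every color appearing on an edge of some F_i appears on at least two edges of G. Let G' be the spanning subgraph of G obtained by removing all edges whose color appears in F₁ ∪ ... ∪ F_t. Then for every partition P of V(G) that satisfies either (a) |P| ≥ 3 and the coloring uses at least max_{Q: |Q|≥3}{ |E(Q,G)| + t(|Q|-2) } + 1 colors, or (b) |P| = 2 and |c(E(G))| > |E(P,G)| (with the same hypothesis on the total number of colors), we have |c(cr(P,G'))| + Σ_{i=1}^{t} |cr(P,F_i)| ≥ t(|P| - 1). -/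

import Mathlib

open Finset
open scoped Classical

/-- The set of non-crossing edges of `G` with respect to a partition `P` of the
vertex set: edges whose two endpoints lie in the same part of `P`. -/
noncomputable def edgesNonCrossing {V : Type} [Fintype V] (G : SimpleGraph V)
    (P : Finpartition (Finset.univ : Finset V)) : Finset (Sym2 V) :=
  G.edgeFinset.filter (fun e => ∃ p ∈ P.parts, ∀ v ∈ e, v ∈ p)

/-- The set of crossing edges of `G` with respect to a partition `P` of the
vertex set: edges whose endpoints lie in different parts of `P`. -/
noncomputable def edgesCrossing {V : Type} [Fintype V] (G : SimpleGraph V)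
    (P : Finpartition (Finset.univ : Finset V)) : Finset (Sym2 V) :=
  G.edgeFinset.filter (fun e => ¬ ∃ p ∈ P.parts, ∀ v ∈ e, v ∈ p)

/-- `G`, edge-colored by `c`, contains `t` pairwise edge-disjoint rainbow
spanning trees. -/
def HasRainbowSpanningTrees {V : Type} [Fintype V] (G : SimpleGraph V)
    (c : Sym2 V → ℕ) (t : ℕ) : Prop :=
  ∃ T : Fin t → SimpleGraph V,
    (∀ i, T i ≤ G) ∧ (∀ i, (T i).IsTree) ∧
    (∀ i, Set.InjOn c ((T i).edgeSet)) ∧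
    (∀ i j, i ≠ j → Disjoint ((T i).edgeSet) ((T j).edgeSet))

/-- The anti-Ramsey number `r(G,t)`: the maximum number of colors in an
edge-coloring of `G` containing no `t` pairwise edge-disjoint rainbow spanning
trees. -/
noncomputable def antiRamsey {V : Type} [Fintype V] (G : SimpleGraph V) (t : ℕ) : ℕ :=
  sSup {m | ∃ c : Sym2 V → ℕ, (G.edgeFinset.image c).card = m ∧
    ¬ HasRainbowSpanningTrees G c t}

/-- `max_{P : |P| ≥ 3} { |E(P,G)| + t(|P|-2) }`. -/
noncomputable def maxNonCross3 {V : Type} [Fintype V] (G : SimpleGraph V) (t : ℕ) : ℕ :=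
  sSup {m | ∃ P : Finpartition (Finset.univ : Finset V), 3 ≤ P.parts.card ∧
    m = (edgesNonCrossing G P).card + t * (P.parts.card - 2)}

/-- `f_G(s)`: the maximum of `|E(P,G)|` over partitions of the vertex set into
exactly `s` parts. -/
noncomputable def fMax {V : Type} [Fintype V] (G : SimpleGraph V) (s : ℕ) : ℕ :=
  sSup {m | ∃ P : Finpartition (Finset.univ : Finset V), P.parts.card = s ∧
    m = (edgesNonCrossing G P).card}

/-- The number of edges of `G` induced by a set `p` of vertices. -/
noncomputable def edgesWithin {V : Type} [Fintype V] (G : SimpleGraph V) (p : Finset V) : ℕ :=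
  (G.edgeFinset.filter (fun e => ∀ v ∈ e, v ∈ p)).card

/-- One splitting step: remove a single vertex from a currently largest part
(measured by the number of non-crossing edges it induces) to form a new
singleton part. -/
def SplitStep {V : Type} [Fintype V] (G : SimpleGraph V)
    (P Q : Finpartition (Finset.univ : Finset V)) : Prop :=
  ∃ p ∈ P.parts, (∀ q ∈ P.parts, edgesWithin G q ≤ edgesWithin G p) ∧
    ∃ v ∈ p, p.erase v ≠ ∅ ∧
      Q.parts = insert {v} (insert (p.erase v) (P.parts.erase p))

/-! Every color of `G` is the color of a crossing edge of `G'`, of a forest edge, or of a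
non-crossing edge of `G` outside the forests. Hence
`|c(E(G))| ≤ |c(cr(P,G'))| + |c(∪Fᵢ)| + |E(P,G)| - ∑ᵢ|E(P,Fᵢ)|`, and splitting
`|E(Fᵢ)| = |E(P,Fᵢ)| + |cr(P,Fᵢ)|` in the size hypothesis turns this into
`|c(E(G))| + t - 1 ≤ |c(cr(P,G'))| + ∑ᵢ|cr(P,Fᵢ)| + |E(P,G)|`. The lower bound on the number
of colors bounds `|E(P,G)|` by `|c(E(G))| - 1 - t(|P| - 2)` when `|P| ≥ 3`, and the extra
hypothesis does so by `|c(E(G))| - 1` when `|P| = 2`. -/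

section

variable {V : Type} [Fintype V] {ι : Type} [Fintype ι]

theorem card_edgesNonCrossing_add_card_edgesCrossing (G : SimpleGraph V)
    (P : Finpartition (univ : Finset V)) :
    #(edgesNonCrossing G P) + #(edgesCrossing G P) = #G.edgeFinset :=
  card_filter_add_card_filter_not _

theorem edgesNonCrossing_mono {G H : SimpleGraph V} (h : G ≤ H)
    (P : Finpartition (univ : Finset V)) :
    edgesNonCrossing G P ⊆ edgesNonCrossing H P :=
  filter_subset_filter _ (SimpleGraph.edgeFinset_mono h)

theorem card_biUnion_edgesNonCrossing {F : ι → SimpleGraph V}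
    (hF : Pairwise fun i j => Disjoint (F i).edgeSet (F j).edgeSet)
    (P : Finpartition (univ : Finset V)) :
    #(univ.biUnion fun i => edgesNonCrossing (F i) P) = ∑ i, #(edgesNonCrossing (F i) P) := by
  refine card_biUnion fun i _ j _ hij => ?_
  have hdisj : Disjoint (F i).edgeFinset (F j).edgeFinset := by
    simpa only [SimpleGraph.edgeFinset, Set.disjoint_toFinset] using hF hij
  exact hdisj.mono (filter_subset _ _) (filter_subset _ _)

theorem le_maxNonCross3 (G : SimpleGraph V) (t : ℕ) {P : Finpartition (univ : Finset V)}
    (hP : 3 ≤ #P.parts) :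
    #(edgesNonCrossing G P) + t * (#P.parts - 2) ≤ maxNonCross3 G t := by
  refine le_csSup ⟨#G.edgeFinset + t * Fintype.card V, ?_⟩ ⟨P, hP, rfl⟩
  rintro m ⟨Q, -, rfl⟩
  have hQ : #Q.parts ≤ Fintype.card V := by simpa using Q.card_parts_le_card
  gcongr
  · exact filter_subset _ _
  · omega

variable (G : SimpleGraph V) (c : Sym2 V → ℕ) (F : ι → SimpleGraph V)
  (P : Finpartition (univ : Finset V))

theorem image_edgeFinset_subset_crossing_union_forests_union :
    G.edgeFinset.image c ⊆
      (edgesCrossing (G.deleteEdges {e | ∃ i, ∃ f ∈ (F i).edgeSet, c f = c e}) P).image c ∪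
        (univ.biUnion fun i => (F i).edgeFinset).image c ∪
        (edgesNonCrossing G P \ univ.biUnion fun i => edgesNonCrossing (F i) P).image c := by
  intro x hx
  obtain ⟨e, he, rfl⟩ := mem_image.mp hx
  by_cases hF : c e ∈ (univ.biUnion fun i => (F i).edgeFinset).image c
  · exact mem_union_left _ (mem_union_right _ hF)
  have hcolor : ∀ i, ∀ f ∈ (F i).edgeSet, c f ≠ c e := fun i f hf hcf =>
    hF (mem_image.mpr ⟨f, mem_biUnion.mpr ⟨i, mem_univ i, by simpa using hf⟩, hcf⟩)
  by_cases hnc : ∃ p ∈ P.parts, ∀ v ∈ e, v ∈ p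
  · refine mem_union_right _ (mem_image_of_mem c (mem_sdiff.mpr ⟨mem_filter.mpr ⟨he, hnc⟩, ?_⟩))
    intro heU
    obtain ⟨i, -, hi⟩ := mem_biUnion.mp heU
    exact hcolor i e (by simpa using (mem_filter.mp hi).1) rfl
  · refine mem_union_left _ (mem_union_left _ (mem_image_of_mem c (mem_filter.mpr ⟨?_, hnc⟩)))
    convert SimpleGraph.mem_edgeFinset.mpr ?_
    rw [SimpleGraph.edgeSet_deleteEdges]
    exact ⟨SimpleGraph.mem_edgeFinset.mp he, fun ⟨i, f, hf, hcf⟩ => hcolor i f hf hcf⟩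

theorem card_image_edgeFinset_add_le {k : ℕ} (hFsub : ∀ i, F i ≤ G)
    (hFdisj : Pairwise fun i j => Disjoint (F i).edgeSet (F j).edgeSet)
    (hsize : k + #((univ.biUnion fun i => (F i).edgeFinset).image c)
      ≤ ∑ i, #(F i).edgeFinset) :
    #(G.edgeFinset.image c) + k ≤
      #((edgesCrossing (G.deleteEdges {e | ∃ i, ∃ f ∈ (F i).edgeSet, c f = c e}) P).image c)
        + ∑ i, #(edgesCrossing (F i) P) + #(edgesNonCrossing G P) := by
  set U := univ.biUnion fun i => edgesNonCrossing (F i) P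
  have hUsub : U ⊆ edgesNonCrossing G P :=
    biUnion_subset.mpr fun i _ => edgesNonCrossing_mono (hFsub i) P
  have hU : #U ≤ #(edgesNonCrossing G P) := card_le_card hUsub
  have hcover :=
    (card_le_card (image_edgeFinset_subset_crossing_union_forests_union G c F P)).trans
      ((card_union_le _ _).trans (add_le_add (card_union_le _ _) card_image_le))
  rw [card_sdiff_of_subset hUsub] at hcover
  have hsplit : ∑ i, #(edgesNonCrossing (F i) P) + ∑ i, #(edgesCrossing (F i) P)
      = ∑ i, #(F i).edgeFinset := by
    rw [← sum_add_distrib]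
    exact sum_congr rfl fun i _ => card_edgesNonCrossing_add_card_edgesCrossing (F i) P
  rw [card_biUnion_edgesNonCrossing hFdisj] at hU hcover
  omega

end

theorem stmt11_general {V : Type} [Fintype V] (G : SimpleGraph V) (c : Sym2 V → ℕ)
    (t : ℕ)
    (F : Fin t → SimpleGraph V)
    (hFsub : ∀ i, F i ≤ G)
    (hFdisj : ∀ i j, i ≠ j → Disjoint ((F i).edgeSet) ((F j).edgeSet))
    (hsize : t - 1 + ((Finset.univ.biUnion (fun i => (F i).edgeFinset)).image c).card
      ≤ ∑ i, (F i).edgeFinset.card)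
    (hc : maxNonCross3 G t + 1 ≤ (G.edgeFinset.image c).card) :
    ∀ P : Finpartition (Finset.univ : Finset V),
      (3 ≤ P.parts.card ∨
        (P.parts.card = 2 ∧ (edgesNonCrossing G P).card < (G.edgeFinset.image c).card)) →
      t * (P.parts.card - 1) ≤
        ((edgesCrossing
            (G.deleteEdges {e | ∃ i, ∃ f ∈ (F i).edgeSet, c f = c e}) P).image c).card
          + ∑ i, (edgesCrossing (F i) P).card := by
  intro P hP
  have hkey := card_image_edgeFinset_add_le G c F P hFsub (fun i j => hFdisj i j) hsize
  rcases hP with h3 | ⟨h2, hlt⟩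
  · have hmax := le_maxNonCross3 G t h3
    have hsucc : t * (#P.parts - 1) = t * (#P.parts - 2) + t := by
      rw [← Nat.mul_succ]
      congr 1
      omega
    omega
  · rw [h2]
    omega

/-- Suppose `F₁,…,F_t` are edge-disjoint rainbow spanning
forests with `∑ᵢ|E(Fᵢ)| ≥ t - 1 + |c(∪ᵢFᵢ)|`, each color appearing in some `Fᵢ`
appears on at least two edges of `G`, and the coloring uses at least
`max_{Q : |Q| ≥ 3}{|E(Q,G)| + t(|Q|-2)} + 1` colors. Then every partition `P`
with `|P| ≥ 3`, or with `|P| = 2` and `|c(E(G))| > |E(P,G)|`, satisfies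
`|c(cr(P,G'))| + ∑ᵢ|cr(P,Fᵢ)| ≥ t(|P|-1)`, where `G'` is obtained from `G` by
removing all edges whose color appears in some `Fᵢ`. -/
theorem stmt11 {V : Type} [Fintype V] (G : SimpleGraph V) (c : Sym2 V → ℕ)
    (t : ℕ) (ht : 0 < t) (hV : 3 ≤ Fintype.card V)
    (F : Fin t → SimpleGraph V)
    (hFsub : ∀ i, F i ≤ G) (hFacyc : ∀ i, (F i).IsAcyclic)
    (hFrb : ∀ i, Set.InjOn c ((F i).edgeSet))
    (hFdisj : ∀ i j, i ≠ j → Disjoint ((F i).edgeSet) ((F j).edgeSet))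
    (hsize : t - 1 + ((Finset.univ.biUnion (fun i => (F i).edgeFinset)).image c).card
      ≤ ∑ i, (F i).edgeFinset.card)
    (htwice : ∀ i, ∀ e ∈ (F i).edgeSet, ∃ f ∈ G.edgeSet, f ≠ e ∧ c f = c e)
    (hc : maxNonCross3 G t + 1 ≤ (G.edgeFinset.image c).card) :
    ∀ P : Finpartition (Finset.univ : Finset V),
      (3 ≤ P.parts.card ∨
        (P.parts.card = 2 ∧ (edgesNonCrossing G P).card < (G.edgeFinset.image c).card)) →
      t * (P.parts.card - 1) ≤
        ((edgesCrossing
            (G.deleteEdges {e | ∃ i, ∃ f ∈ (F i).edgeSet, c f = c e}) P).image c).card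
          + ∑ i, (edgesCrossing (F i) P).card :=
  stmt11_general G c t F hFsub hFdisj hsize hc
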